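/- Let κ₁ ≅ κ₂ be equivalent OCFs over Σ, let A ⊆ Ω_Σ be a contingent proposition, and let γ₁, γ₂ be integers with γᵢ ≥ κᵢ(Aᶜ) − κᵢ(A) for i = 1, 2. Suppose either both contractions are c-ignorations (γᵢ = κᵢ(Aᶜ) − κᵢ(A) for i = 1, 2) or both are c-revocations (γᵢ > κᵢ(Aᶜ) − κᵢ(A) for i = 1, 2). Then the posterior belief sets coincide: (κ₁ −_{γ₁} A)⁻¹(0) = (κ₂ −_{γ₂} A)⁻¹(0). Hence c-ignorations and c-revocations satisfy Belief Equivalence (BE). -/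
import Mathlib


/-- Possible worlds over a signature `σ`. -/
abbrev World (σ : Type*) := σ → Bool

/-- The rank of a proposition `A` under the ranking function `κ`. -/
noncomputable def rank {α : Type*} (κ : α → ℕ) (A : Set α) : ℕ∞ :=
  ⨅ ω ∈ A, (κ ω : ℕ∞)

/-- `κ` accepts the conditional `(B|A)` iff `κ(A ∩ B) < κ(A ∩ Bᶜ)`. -/
def acceptsCond {α : Type*} (κ : α → ℕ) (A B : Set α) : Prop :=
  rank κ (A ∩ B) < rank κ (A ∩ Bᶜ)

/-- The natural-number rank of a proposition. -/
noncomputable def nrank {α : Type*} (κ : α → ℕ) (A : Set α) : ℕ := sInf (κ '' A)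

/-- The c-contraction of `κ` by `A` with impact `γ`. -/
noncomputable def ccontr {σ : Type*} (κ : World σ → ℕ) (A : Set (World σ)) (γ : ℤ) :
    World σ → ℤ :=
  fun ω => (κ ω : ℤ) - (nrank κ Aᶜ : ℤ) + A.indicator (fun _ => γ) ω

lemma rank_singleton {α : Type*} (κ : α → ℕ) (x : α) : rank κ {x} = (κ x : ℕ∞) := by
  simp [rank]

lemma ord_iff {α : Type*} (κ₁ κ₂ : α → ℕ)
    (hequiv : ∀ A B : Set α, acceptsCond κ₁ A B ↔ acceptsCond κ₂ A B)
    (ω ω' : α) : κ₁ ω < κ₁ ω' ↔ κ₂ ω < κ₂ ω' := by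
  by_cases h : ω = ω'
  · subst h; simp
  · have e1 : ({ω, ω'} : Set α) ∩ {ω} = {ω} := by
      ext x; simp (config := {contextual := true}) [and_or_left]
    have e2 : ({ω, ω'} : Set α) ∩ {ω}ᶜ = {ω'} := by
      ext x; constructor
      · rintro ⟨hx1, hx2⟩; rcases hx1 with rfl | rfl
        · exact absurd rfl hx2
        · rfl
      · rintro rfl; exact ⟨Or.inr rfl, fun hc => h hc.symm⟩
    have := hequiv {ω, ω'} {ω}
    simp only [acceptsCond, e1, e2, rank_singleton, Nat.cast_lt] at this
    exact this

lemma nrank_le {α : Type*} (κ : α → ℕ) {X : Set α} {ω : α} (hω : ω ∈ X) :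
    nrank κ X ≤ κ ω := Nat.sInf_le ⟨ω, hω, rfl⟩

lemma min_iff {α : Type*} (κ : α → ℕ) {X : Set α} {ω : α} (hω : ω ∈ X) :
    κ ω = nrank κ X ↔ ∀ ω' ∈ X, κ ω ≤ κ ω' := by
  constructor
  · intro h ω' hω'; rw [h]; exact nrank_le κ hω'
  · intro h
    exact le_antisymm (le_csInf ⟨κ ω, ω, hω, rfl⟩ (by rintro b ⟨x, hx, rfl⟩; exact h x hx))
      (nrank_le κ hω)

lemma min_trans {α : Type*} (κ₁ κ₂ : α → ℕ)
    (hequiv : ∀ A B : Set α, acceptsCond κ₁ A B ↔ acceptsCond κ₂ A B)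
    {X : Set α} {ω : α} (hω : ω ∈ X) :
    κ₁ ω = nrank κ₁ X ↔ κ₂ ω = nrank κ₂ X := by
  rw [min_iff κ₁ hω, min_iff κ₂ hω]
  constructor <;> intro h ω' hω'
  · by_contra hc
    exact absurd ((ord_iff κ₁ κ₂ hequiv ω' ω).2 (lt_of_not_ge hc)) (not_lt.2 (h ω' hω'))
  · by_contra hc
    exact absurd ((ord_iff κ₁ κ₂ hequiv ω' ω).1 (lt_of_not_ge hc)) (not_lt.2 (h ω' hω'))

/-- Belief Equivalence (BE) for c-ignorations and c-revocations: if
`κ₁ ≅ κ₂` and both contractions are c-ignorations, or both are c-revocations,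
then the posterior belief sets (most plausible worlds) coincide. -/
theorem stmt17 {σ : Type*} [Fintype σ] [Nonempty σ]
    (κ₁ κ₂ : World σ → ℕ) (h₁ : ∃ ω, κ₁ ω = 0) (h₂ : ∃ ω, κ₂ ω = 0)
    (hequiv : ∀ A B : Set (World σ), acceptsCond κ₁ A B ↔ acceptsCond κ₂ A B)
    (A : Set (World σ)) (hA : A.Nonempty) (hAc : Aᶜ.Nonempty)
    (γ₁ γ₂ : ℤ)
    (hγ₁ : (nrank κ₁ Aᶜ : ℤ) - (nrank κ₁ A : ℤ) ≤ γ₁)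
    (hγ₂ : (nrank κ₂ Aᶜ : ℤ) - (nrank κ₂ A : ℤ) ≤ γ₂)
    (hcase :
      (γ₁ = (nrank κ₁ Aᶜ : ℤ) - (nrank κ₁ A : ℤ) ∧
        γ₂ = (nrank κ₂ Aᶜ : ℤ) - (nrank κ₂ A : ℤ)) ∨
      ((nrank κ₁ Aᶜ : ℤ) - (nrank κ₁ A : ℤ) < γ₁ ∧
        (nrank κ₂ Aᶜ : ℤ) - (nrank κ₂ A : ℤ) < γ₂)) :
    (ccontr κ₁ A γ₁) ⁻¹' {0} = (ccontr κ₂ A γ₂) ⁻¹' {0} := by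
  ext ω
  simp only [Set.mem_preimage, Set.mem_singleton_iff, ccontr]
  by_cases hω : ω ∈ A
  · rw [Set.indicator_of_mem hω, Set.indicator_of_mem hω]
    rcases hcase with ⟨hg1, hg2⟩ | ⟨hg1, hg2⟩
    · subst hg1; subst hg2
      have t := min_trans κ₁ κ₂ hequiv hω
      constructor <;> intro h
      · have : κ₁ ω = nrank κ₁ A := by omega
        have := t.1 this; omega
      · have : κ₂ ω = nrank κ₂ A := by omega
        have := t.2 this; omega
    · have l1 : nrank κ₁ A ≤ κ₁ ω := nrank_le κ₁ hω
      have l2 : nrank κ₂ A ≤ κ₂ ω := nrank_le κ₂ hω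
      constructor <;> intro h <;> omega
  · rw [Set.indicator_of_notMem hω, Set.indicator_of_notMem hω]
    have t := min_trans κ₁ κ₂ hequiv (X := Aᶜ) hω
    constructor <;> intro h
    · have : κ₁ ω = nrank κ₁ Aᶜ := by omega
      have := t.1 this; omega
    · have : κ₂ ω = nrank κ₂ Aᶜ := by omega
      have := t.2 this; omega
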